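/- arXiv:1509.05250 — 2 statements merged into one kernel-verified Lean document; each statement's English description precedes it below -/
import Mathlib

section
/- Let n ≥ 1 and let R ∈ {0, ..., n}. For any function f of n arguments and any values θ_1, ..., θ_N, the restricted sums ∑^{n,R} defined by summing over indices j_1,...,j_n ∈ {1,...,N} with j_i ≠ j_k for all i ≠ k with i, k > R satisfy the recursion: ∑^{n,R} f(θ_{j_1},...,θ_{j_n}) = ∑^{n,R-1} f(θ_{j_1},...,θ_{j_n}) + ∑_{t=R+1}^{n} ∑^{n-1,R-1} g_{t,R}(θ_{j_1},...,θ_{j_{n-1}}), where g_{t,R} is obtained from f by identifying the R-th argument with the t-th argument and relabeling. -/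
open Finset

/-!
A tuple injective beyond position `R` but not beyond `R - 1` has its `R`-th entry equal to exactly
one later entry, the `t`-th one, so the tuples counted in `∑^{n,R}` but not in `∑^{n,R-1}` split
according to `t`. For fixed `t`, deleting the `R`-th entry maps them bijectively onto the tuples of
length `n - 1` counted in `∑^{n-1,R-1}` (the deleted entry is recovered as a copy of the `t`-th
one), and it turns `f` into `g_{t,R}`.
-/

/-- The restricted sum `∑^{n,R} F(θ_{j_1},…,θ_{j_n})`: the sum over all
`j : {1,…,n} → {1,…,N}` such that `j_i ≠ j_k` whenever `i ≠ k` and both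
(1-indexed) positions `i, k` exceed `R`.  The argument tuple is passed to `F`
as a function on `ℕ` using the 1-indexed coordinates, padded by `a₀`. -/
def restrictedSum {M α : Type*} [AddCommMonoid M] (N n R : ℕ)
    (θ : Fin N → α) (a₀ : α) (F : (ℕ → α) → M) : M :=
  ∑ j ∈ (Finset.univ : Finset (Fin n → Fin N)).filter
      (fun j => ∀ i k : Fin n, i ≠ k → R ≤ i.val → R ≤ k.val → j i ≠ j k),
    F (fun i => if h : 1 ≤ i ∧ i ≤ n then θ (j ⟨i - 1, by omega⟩) else a₀)

lemma Fin.val_succAbove {n : ℕ} (p : Fin (n + 1)) (i : Fin n) :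
    (p.succAbove i : ℕ) = if i.val < p.val then i.val else i.val + 1 := by
  unfold Fin.succAbove
  split_ifs <;> simp_all [Fin.lt_def]

section RestrictedTuples

variable {β : Type*} [DecidableEq β] [Fintype β]

-- Positions are `0`-indexed here, so `S ≤ i.val` is the paper's `i > S`.
def restrictedTuples (n S : ℕ) : Finset (Fin n → β) :=
  univ.filter fun j => ∀ i k : Fin n, i ≠ k → S ≤ i.val → S ≤ k.val → j i ≠ j k

lemma mem_restrictedTuples {n S : ℕ} {j : Fin n → β} :
    j ∈ restrictedTuples n S ↔ Set.InjOn j {i | S ≤ i.val} := by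
  simp only [restrictedTuples, mem_filter, mem_univ, true_and, Set.InjOn]
  exact ⟨fun h i hi k hk hik => by_contra fun hne => h i k hne hi hk hik,
    fun h i k hne hi hk hik => hne (h hi hk hik)⟩

lemma mem_restrictedTuples_iff_forall_ne {n : ℕ} {p : Fin n} {j : Fin n → β} :
    j ∈ restrictedTuples n p ↔
      j ∈ restrictedTuples n (p + 1) ∧ ∀ s, p < s → j s ≠ j p := by
  have hset : {i : Fin n | (p : ℕ) ≤ i} = insert p {i : Fin n | (p : ℕ) + 1 ≤ i} := by
    ext i
    simp only [Set.mem_insert_iff, Set.mem_ofPred_eq, Fin.ext_iff]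
    omega
  rw [mem_restrictedTuples, mem_restrictedTuples, hset, Set.injOn_insert (by simp)]
  simp only [Set.mem_image, Set.mem_ofPred_eq, not_exists, not_and, ne_eq, Fin.lt_def,
    Nat.succ_le_iff]

lemma removeNth_mem_restrictedTuples_iff {m : ℕ} (p : Fin (m + 1)) (j : Fin (m + 1) → β) :
    p.removeNth j ∈ restrictedTuples m p ↔ j ∈ restrictedTuples (m + 1) (p + 1) := by
  have himage :
      p.succAbove '' {i : Fin m | (p : ℕ) ≤ i} = {i : Fin (m + 1) | (p : ℕ) + 1 ≤ i} := by
    ext i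
    simp only [Set.mem_image, Set.mem_ofPred_eq]
    constructor
    · rintro ⟨i, hi, rfl⟩
      rw [Fin.val_succAbove, if_neg (by omega)]
      omega
    · intro hi
      obtain ⟨k, rfl⟩ := Fin.exists_succAbove_eq (x := i) (y := p) (by rintro rfl; omega)
      rw [Fin.val_succAbove] at hi
      refine ⟨k, ?_, rfl⟩
      split_ifs at hi <;> omega
  rw [mem_restrictedTuples, mem_restrictedTuples, ← himage]
  exact (Fin.succAbove_right_injective.injOn).comp_iff

lemma sum_restrictedTuples_succ {M : Type*} [AddCommMonoid M] {n : ℕ} (p : Fin n)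
    (F : (Fin n → β) → M) :
    ∑ j ∈ restrictedTuples n (p + 1), F j =
      ∑ j ∈ restrictedTuples n p, F j +
        ∑ s ∈ Ioi p, ∑ j ∈ (restrictedTuples n (p + 1)).filter (fun j => j p = j s), F j := by
  have hsub : restrictedTuples n p ⊆ restrictedTuples (β := β) n (p + 1) :=
    fun j hj => (mem_restrictedTuples_iff_forall_ne.1 hj).1
  have hdecomp : restrictedTuples n (p + 1) \ restrictedTuples n p =
      (Ioi p).biUnion fun s =>
        (restrictedTuples (β := β) n (p + 1)).filter (fun j => j p = j s) := by
    ext j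
    simp only [mem_sdiff, mem_biUnion, mem_Ioi, mem_filter, mem_restrictedTuples_iff_forall_ne]
    grind
  have hdisj : (Ioi p : Set (Fin n)).PairwiseDisjoint
      fun s => (restrictedTuples (β := β) n (p + 1)).filter (fun j => j p = j s) := by
    intro s hs s' hs' hne
    refine disjoint_left.2 fun j hjs hjs' => hne ?_
    rw [mem_filter, mem_restrictedTuples] at hjs hjs'
    simp only [coe_Ioi, Set.mem_Ioi, Fin.lt_def] at hs hs'
    exact hjs.1 (Set.mem_ofPred.2 (by omega)) (Set.mem_ofPred.2 (by omega))
      (hjs.2.symm.trans hjs'.2)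
  rw [← sum_sdiff hsub, add_comm, hdecomp, sum_biUnion hdisj]

lemma sum_restrictedTuples_filter_removeNth {M : Type*} [AddCommMonoid M] {m : ℕ}
    (p : Fin (m + 1)) (q : Fin m) (G : (Fin m → β) → M) :
    ∑ j ∈ (restrictedTuples (m + 1) (p + 1)).filter (fun j => j p = j (p.succAbove q)),
      G (p.removeNth j) = ∑ w ∈ restrictedTuples m p, G w := by
  refine sum_nbij' p.removeNth (fun w => p.insertNth (w q) w) ?_ ?_ ?_ ?_ (fun _ _ => rfl)
  · intro j hj
    exact (removeNth_mem_restrictedTuples_iff p j).2 (mem_filter.1 hj).1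
  · intro w hw
    refine mem_filter.2 ⟨(removeNth_mem_restrictedTuples_iff p _).1 ?_, ?_⟩
    · simpa using hw
    · simp
  · intro j hj
    have hjq : p.removeNth j q = j p := (mem_filter.1 hj).2.symm
    simp only [hjq, Fin.insertNth_self_removeNth]
  · intro w _
    simp

end RestrictedTuples

def padTuple {α β : Type*} (n : ℕ) (θ : β → α) (a₀ : α) (j : Fin n → β) : ℕ → α :=
  fun i => if h : 1 ≤ i ∧ i ≤ n then θ (j ⟨i - 1, by omega⟩) else a₀

lemma padTuple_eq_of_apply_eq {α β : Type*} {m : ℕ} (θ : β → α) (a₀ : α) {j : Fin (m + 1) → β}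
    {p s : Fin (m + 1)} (hps : p < s) (hj : j p = j s) :
    padTuple (m + 1) θ a₀ j = fun i : ℕ =>
      if i < p + 1 then padTuple m θ a₀ (p.removeNth j) i
      else if i = p + 1 then padTuple m θ a₀ (p.removeNth j) s
      else padTuple m θ a₀ (p.removeNth j) (i - 1) := by
  rw [Fin.lt_def] at hps
  funext i
  simp only [padTuple, Fin.removeNth_apply]
  split_ifs <;> try omega
  all_goals first
    | rfl
    | (congr 2; ext; simp only [Fin.val_succAbove]; split_ifs <;> omega)
    -- position `p + 1`, read off at `s`
    | (refine congrArg θ ((congrArg j (Fin.ext ?_)).trans (hj.trans (congrArg j (Fin.ext ?_))))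
       · simp only; omega
       · simp only [Fin.val_succAbove]; split_ifs <;> omega)

lemma restrictedSum_eq_sum {M α : Type*} [AddCommMonoid M] (N n R : ℕ) (θ : Fin N → α) (a₀ : α)
    (F : (ℕ → α) → M) :
    restrictedSum N n R θ a₀ F = ∑ j ∈ restrictedTuples n R, F (padTuple n θ a₀ j) :=
  rfl

lemma Fin.sum_Ioi_eq_sum_Icc {M : Type*} [AddCommMonoid M] {n : ℕ} (p : Fin n) (g : ℕ → M) :
    ∑ s ∈ Ioi p, g (s + 1) = ∑ t ∈ Icc ((p : ℕ) + 2) n, g t := by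
  have hIcc : Icc ((p : ℕ) + 2) n = (Ioo (p : ℕ) n).map (addRightEmbedding 1) := by
    rw [map_add_right_Ioo]
    ext
    simp only [mem_Icc, mem_Ioo]
    omega
  rw [hIcc, sum_map, ← Fin.map_valEmbedding_Ioi, sum_map]
  rfl

/-- Recursion for restricted sums:
`∑^{n,R} f = ∑^{n,R-1} f + ∑_{t=R+1}^{n} ∑^{n-1,R-1} g_{t,R}`, where `g_{t,R}` is
obtained from `f` by identifying the `R`-th argument with the `t`-th argument and
relabelling the remaining `n-1` arguments. -/
theorem stmt16 {M α : Type*} [AddCommMonoid M] (N n R : ℕ) (hR : 1 ≤ R) (hRn : R ≤ n)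
    (θ : Fin N → α) (a₀ : α) (f : (ℕ → α) → M) :
    restrictedSum N n R θ a₀ f =
      restrictedSum N n (R - 1) θ a₀ f +
        ∑ t ∈ Finset.Icc (R + 1) n,
          restrictedSum N (n - 1) (R - 1) θ a₀
            (fun w => f (fun i => if i < R then w i else if i = R then w (t - 1) else w (i - 1))) := by
  obtain ⟨m, rfl⟩ : ∃ m, n = m + 1 := ⟨n - 1, by omega⟩
  obtain ⟨p, rfl⟩ : ∃ p : Fin (m + 1), R = p + 1 :=
    ⟨⟨R - 1, by omega⟩, (Nat.sub_add_cancel hR).symm⟩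
  simp only [restrictedSum_eq_sum, Nat.add_sub_cancel]
  rw [sum_restrictedTuples_succ p]
  congr 1
  refine Eq.trans (sum_congr rfl fun s hs => ?_) (Fin.sum_Ioi_eq_sum_Icc p _)
  obtain ⟨q, rfl⟩ := Fin.exists_succAbove_eq (ne_of_gt (mem_Ioi.1 hs))
  rw [Nat.add_sub_cancel, ← sum_restrictedTuples_filter_removeNth p q]
  refine sum_congr rfl fun j hj => congrArg f ?_
  exact padTuple_eq_of_apply_eq θ a₀ (mem_Ioi.1 hs) (mem_filter.1 hj).2
end

section
/- For real α ≠ 0 and large L, if one averages (1/X)∫_0^X terms of the form ((√M t)/(2π))^{-2πia/L} · 2 log((√M t)/(2π)) · L/(2πia) dt minus (1/X)∫_0^X 2 log((√M t)/(2π)) · L/(2πia) dt with L = log(√M X/(2π)), the leading asymptotic as X → ∞ is (L^2/(πia))(e^{-2πia} - 1); consequently the symmetrized combination over ±a has leading term -4L^2 sin(2πa)/(2πa). -/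
/-!
With `c = √M/(2π)`, `L = log(cX)` and `s = -2πia/L` (so `Re s = 0`), the substitution `u = ct`
and the antiderivative `u^(s+1)/(s+1) · (log u - 1/(s+1))` of `u^s log u` evaluate both integrals
in closed form. Since `(cX)^s = e^{-2πia}`, `termA M a X / L²` is then a rational function of
`1/L`, continuous at `1/L = 0`, where it takes the value `(e^{-2πia} - 1)/(πia)`. The symmetrised
limit follows from `e^{-iθ} - e^{iθ} = -2i sin θ`.
-/

open Filter Topology Complex intervalIntegral

/-- The averaged difference of integrals
`(1/X)∫₀^X (√M t/(2π))^{-2πia/L} · 2log(√M t/(2π)) · L/(2πia) dt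
  - (1/X)∫₀^X 2log(√M t/(2π)) · L/(2πia) dt`, with `L = log(√M X/(2π))`. -/
noncomputable def termA (M a X : ℝ) : ℂ :=
  (1 / (X : ℂ)) *
      (∫ t in (0 : ℝ)..X,
        (((Real.sqrt M * t / (2 * Real.pi)) : ℝ) : ℂ) ^
            ((-2 * Real.pi * Complex.I * a) / (Real.log (Real.sqrt M * X / (2 * Real.pi)) : ℂ)) *
          (2 * (Real.log (Real.sqrt M * t / (2 * Real.pi)) : ℂ)) *
          ((Real.log (Real.sqrt M * X / (2 * Real.pi)) : ℂ) / (2 * Real.pi * Complex.I * a)))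
    - (1 / (X : ℂ)) *
      (∫ t in (0 : ℝ)..X,
        (2 * (Real.log (Real.sqrt M * t / (2 * Real.pi)) : ℂ)) *
          ((Real.log (Real.sqrt M * X / (2 * Real.pi)) : ℂ) / (2 * Real.pi * Complex.I * a)))

open scoped Real

theorem norm_ofReal_cpow_of_re_eq_zero {s : ℂ} (hs : s.re = 0) {u : ℝ} (hu : 0 < u) :
    ‖(u : ℂ) ^ s‖ = 1 := by
  rw [norm_cpow_eq_rpow_re_of_pos hu, hs, Real.rpow_zero]

theorem add_one_ne_zero_of_re_eq_zero {s : ℂ} (hs : s.re = 0) : s + 1 ≠ 0 :=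
  fun h => by simpa [hs] using congrArg re h

theorem ofReal_cpow_div_log_add_one {Y : ℝ} (hY : 0 < Y) (hY1 : Real.log Y ≠ 0) (z : ℂ) :
    (Y : ℂ) ^ (z / Real.log Y + 1) = Y * exp z := by
  have hY0 : (Y : ℂ) ≠ 0 := ofReal_ne_zero.2 hY.ne'
  rw [cpow_add _ _ hY0, cpow_one, cpow_def_of_ne_zero hY0, ← ofReal_log hY.le,
    mul_div_cancel₀ _ (ofReal_ne_zero.2 hY1), mul_comm]

theorem integral_ofReal_cpow_mul_log {s : ℂ} (hs : s.re = 0) {Y : ℝ} (hY : 0 < Y) :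
    ∫ u in (0 : ℝ)..Y, (u : ℂ) ^ s * Real.log u
      = (Y : ℂ) ^ (s + 1) / (s + 1) * (Real.log Y - 1 / (s + 1)) := by
  have hs1 := add_one_ne_zero_of_re_eq_zero hs
  have hs_ne : s ≠ -1 := fun h => hs1 (by simp [h])
  set F : ℝ → ℂ := fun u => (u : ℂ) ^ (s + 1) / (s + 1) * (Real.log u - 1 / (s + 1))
  have hderiv : ∀ u ∈ Set.Ioo 0 Y, HasDerivAt F ((u : ℂ) ^ s * Real.log u) u := by
    intro u hu
    have hu0 : (u : ℂ) ≠ 0 := ofReal_ne_zero.2 hu.1.ne'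
    have hlog : HasDerivAt (fun u : ℝ => (Real.log u : ℂ) - 1 / (s + 1)) (u⁻¹ : ℝ) u :=
      ((Real.hasDerivAt_log hu.1.ne').ofReal_comp).sub_const _
    refine ((hasDerivAt_ofReal_cpow_const' hu.1.ne' hs_ne).mul hlog).congr_deriv ?_
    rw [cpow_add _ _ hu0, cpow_one]
    push_cast
    field_simp
    ring
  have hF0 : Tendsto F (𝓝[>] 0) (𝓝 0) := by
    set G : ℝ → ℂ := fun u => (((u * Real.log u : ℝ) : ℂ) - u / (s + 1)) / (s + 1)
    have hG : Tendsto G (𝓝[>] 0) (𝓝 0) := by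
      have : Continuous G := by fun_prop
      exact (this.tendsto' 0 0 (by simp [G])).mono_left nhdsWithin_le_nhds
    refine tendsto_zero_iff_norm_tendsto_zero.2
      ((tendsto_zero_iff_norm_tendsto_zero.1 hG).congr' ?_)
    filter_upwards [self_mem_nhdsWithin] with u (hu : 0 < u)
    have hu0 : (u : ℂ) ≠ 0 := ofReal_ne_zero.2 hu.ne'
    have : F u = (u : ℂ) ^ s * G u := by
      simp only [F, G, cpow_add _ _ hu0, cpow_one]
      push_cast
      ring
    rw [this, norm_mul, norm_ofReal_cpow_of_re_eq_zero hs hu, one_mul]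
  have hFY : Tendsto F (𝓝[<] Y) (𝓝 (F Y)) := by
    have : ContinuousAt F Y := by
      have hY0 : (Y : ℂ) ∈ slitPlane := ofReal_mem_slitPlane.2 hY
      fun_prop (disch := first | exact hY0 | exact hY.ne')
    exact this.tendsto.mono_left nhdsWithin_le_nhds
  have hint :
      IntervalIntegrable (fun u : ℝ => (u : ℂ) ^ s * Real.log u) MeasureTheory.volume 0 Y := by
    refine (intervalIntegrable_log' (a := 0) (b := Y)).norm.mono_fun' (by fun_prop) ?_
    rw [Set.uIoc_of_le hY.le]
    filter_upwards [MeasureTheory.ae_restrict_mem measurableSet_Ioc] with u hu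
    rw [norm_mul, norm_ofReal_cpow_of_re_eq_zero hs hu.1, one_mul, norm_real]
  rw [integral_eq_sub_of_hasDerivAt_of_tendsto hY hderiv hint hF0 hFY, sub_zero]

theorem integral_ofReal_mul_cpow_mul_log {s : ℂ} (hs : s.re = 0) {c X : ℝ} (hc : 0 < c)
    (hX : 0 < X) :
    ∫ t in (0 : ℝ)..X, ((c * t : ℝ) : ℂ) ^ s * Real.log (c * t)
      = c⁻¹ * (((c * X : ℝ) : ℂ) ^ (s + 1) / (s + 1) *
          (Real.log (c * X) - 1 / (s + 1))) := by
  rw [integral_comp_mul_left (fun u : ℝ => (u : ℂ) ^ s * Real.log u) hc.ne', mul_zero,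
    integral_ofReal_cpow_mul_log hs (mul_pos hc hX), real_smul, ofReal_inv]

noncomputable def termAProfile (a : ℝ) (x : ℂ) : ℂ :=
  1 / (π * I * a) * (exp (-2 * π * I * a) * (1 / (1 + -2 * π * I * a * x)
    - x / (1 + -2 * π * I * a * x) ^ 2) - (1 - x))

theorem termA_div_log_sq {M a X : ℝ} (ha : a ≠ 0) (hX : 1 < Real.sqrt M * X / (2 * Real.pi)) :
    termA M a X / (Real.log (Real.sqrt M * X / (2 * Real.pi)) : ℂ) ^ 2
      = termAProfile a (Real.log (Real.sqrt M * X / (2 * Real.pi)) : ℂ)⁻¹ := by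
  set c := Real.sqrt M / (2 * Real.pi)
  have hscale : ∀ t, Real.sqrt M * t / (2 * Real.pi) = c * t := fun t => by ring
  have hcX : 0 < c * X := by rw [← hscale]; linarith
  have hc : 0 < c := (show 0 ≤ c by positivity).lt_of_ne fun h => by simp [← h] at hcX
  have hX0 : 0 < X := pos_of_mul_pos_right hcX hc.le
  unfold termA
  simp only [hscale] at hX ⊢
  set L := Real.log (c * X)
  have hL : 0 < L := Real.log_pos hX
  set s : ℂ := -2 * π * I * a / L
  have hs : s.re = 0 := by simp [s, div_re]
  set K : ℂ := L / (2 * π * I * a)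
  have hJs : ∫ t in (0 : ℝ)..X, ((c * t : ℝ) : ℂ) ^ s * (2 * (Real.log (c * t) : ℂ)) * K
      = 2 * K * ∫ t in (0 : ℝ)..X, ((c * t : ℝ) : ℂ) ^ s * Real.log (c * t) := by
    rw [← integral_const_mul]; congr 1; ext t; ring
  have hJ0 : ∫ t in (0 : ℝ)..X, (2 * (Real.log (c * t) : ℂ)) * K
      = 2 * K * ∫ t in (0 : ℝ)..X, ((c * t : ℝ) : ℂ) ^ (0 : ℂ) * Real.log (c * t) := by
    rw [← integral_const_mul]; congr 1; ext t; rw [cpow_zero]; ring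
  have hs1 := add_one_ne_zero_of_re_eq_zero hs
  rw [hJs, hJ0, integral_ofReal_mul_cpow_mul_log hs hc hX0,
    integral_ofReal_mul_cpow_mul_log (by simp) hc hX0,
    ofReal_cpow_div_log_add_one hcX hL.ne', termAProfile]
  simp only [zero_add, cpow_one, div_one, show Real.log (c * X) = L from rfl]
  have hLC : (L : ℂ) ≠ 0 := ofReal_ne_zero.2 hL.ne'
  have hXC : (X : ℂ) ≠ 0 := ofReal_ne_zero.2 hX0.ne'
  have hcC : (c : ℂ) ≠ 0 := ofReal_ne_zero.2 hc.ne'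
  have hp : (π * I * a : ℂ) ≠ 0 := by simp [ha, Real.pi_ne_zero]
  have hq : s + 1 = 1 + -2 * π * I * a * (L : ℂ)⁻¹ := by simp only [s]; ring
  rw [hq] at hs1 ⊢
  generalize 1 + -2 * π * I * a * (L : ℂ)⁻¹ = q at hs1 ⊢
  simp only [K]
  push_cast
  field_simp

theorem continuousAt_termAProfile (a : ℝ) : ContinuousAt (termAProfile a) 0 := by
  unfold termAProfile
  fun_prop (disch := simp)

theorem termAProfile_zero (a : ℝ) :
    termAProfile a 0 = 1 / (π * I * a) * (exp (-2 * π * I * a) - 1) := by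
  simp [termAProfile]

theorem one_div_mul_exp_sub_one_add_neg_eq_sin (a : ℝ) :
    1 / (π * I * a) * (exp (-2 * π * I * a) - 1)
      + 1 / (π * I * (-a : ℝ)) * (exp (-2 * π * I * (-a : ℝ)) - 1)
      = ((-4 * Real.sin (2 * π * a) / (2 * π * a) : ℝ) : ℂ) := by
  have hexp :
      exp (-2 * π * I * a) - exp (-2 * π * I * -a) = -2 * I * Complex.sin (2 * π * a) := by
    rw [Complex.sin]; ring_nf; rw [I_sq]; ring_nf
  push_cast
  -- `ring` treats `I⁻¹` as an atom, so `I * I⁻¹ = 1` has to be supplied.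
  linear_combination (1 / (π * I * a)) * hexp
    - 2 * Complex.sin (2 * π * a) / (π * a) * mul_inv_cancel₀ I_ne_zero

theorem tendsto_termA_div_log_sq {M a : ℝ} (hM : 0 < M) (ha : a ≠ 0) :
    Tendsto (fun X : ℝ => termA M a X / ((Real.log (Real.sqrt M * X / (2 * Real.pi)) : ℂ)) ^ 2)
      atTop (𝓝 (1 / (π * I * a) * (exp (-2 * π * I * a) - 1))) := by
  have hscale : Tendsto (fun X : ℝ => Real.sqrt M * X / (2 * Real.pi)) atTop atTop :=
    (tendsto_id.const_mul_atTop (Real.sqrt_pos.2 hM)).atTop_div_const (by positivity)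
  have hinv : Tendsto (fun X : ℝ => ((Real.log (Real.sqrt M * X / (2 * Real.pi)) : ℂ))⁻¹)
      atTop (𝓝 0) := by
    simpa [Function.comp_def] using (continuous_ofReal.tendsto 0).comp
      (tendsto_inv_atTop_zero.comp (Real.tendsto_log_atTop.comp hscale))
  rw [← termAProfile_zero]
  refine ((continuousAt_termAProfile a).tendsto.comp hinv).congr' ?_
  filter_upwards [hscale.eventually_gt_atTop 1] with X hX
  exact (termA_div_log_sq ha hX).symm

/-- As `X → ∞` (so `L = log(√M X/(2π)) → ∞`), the leading asymptotic of the averaged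
integral combination is `(L²/(πia))(e^{-2πia} - 1)`; consequently the symmetrized
combination over `±a` has leading term `-4L² sin(2πa)/(2πa)`. -/
theorem stmt17 (M a : ℝ) (hM : 0 < M) (ha : a ≠ 0) :
    Tendsto (fun X : ℝ => termA M a X / ((Real.log (Real.sqrt M * X / (2 * Real.pi)) : ℂ)) ^ 2)
      atTop (𝓝 ((1 / (Real.pi * Complex.I * a)) * (Complex.exp (-2 * Real.pi * Complex.I * a) - 1))) ∧
    Tendsto (fun X : ℝ =>
        (termA M a X + termA M (-a) X) / ((Real.log (Real.sqrt M * X / (2 * Real.pi)) : ℂ)) ^ 2)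
      atTop (𝓝 (((-4 * Real.sin (2 * Real.pi * a) / (2 * Real.pi * a)) : ℝ) : ℂ)) := by
  refine ⟨tendsto_termA_div_log_sq hM ha, ?_⟩
  rw [← one_div_mul_exp_sub_one_add_neg_eq_sin]
  simpa only [add_div] using
    (tendsto_termA_div_log_sq hM ha).add (tendsto_termA_div_log_sq hM (neg_ne_zero.2 ha))
end
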